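/- Let d ≥ 2 be an integer and let v : {0,1}^d → ℝ be a coalitional game. The Shapley values φ(v) ∈ ℝ^d are the unique minimizer of the Shapley regression loss h_v(φ) over the affine constraint set {φ ∈ ℝ^d : 1^⊤φ = v(1) − v(0)}; that is, φ(v) satisfies 1^⊤φ(v) = v(1) − v(0), and every φ ≠ φ(v) with 1^⊤φ = v(1) − v(0) satisfies h_v(φ) > h_v(φ(v)). -/

import Mathlib

open scoped BigOperators

/-- Normalizing constant `Q = ∑_{k=1}^{d-1} (d-1)/(k(d-k))` of the Shapley kernel. -/
noncomputable def shapQ (d : ℕ) : ℝ :=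
  ∑ k ∈ Finset.Icc 1 (d - 1), ((d : ℝ) - 1) / ((k : ℝ) * ((d : ℝ) - (k : ℝ)))

/-- Shapley kernel distribution on subsets `s ⊆ {1,…,d}`. -/
noncomputable def pSh (d : ℕ) (s : Finset (Fin d)) : ℝ :=
  if 0 < s.card ∧ s.card < d then
    (((d : ℝ) - 1) /
      ((Nat.choose d s.card : ℝ) * (s.card : ℝ) * ((d : ℝ) - (s.card : ℝ)))) / shapQ d
  else 0

/-- Shapley regression loss `h_v(φ) = E_{s∼p_Sh}[(v(s) - v(0) - sᵀφ)²]`. -/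
noncomputable def hLoss (d : ℕ) (v : Finset (Fin d) → ℝ)
    (φ : EuclideanSpace ℝ (Fin d)) : ℝ :=
  ∑ s : Finset (Fin d), pSh d s * (v s - v ∅ - ∑ i ∈ s, φ i) ^ 2

/-- Shapley values `φ_i(v) = (1/d) ∑_{s : i ∉ s} C(d-1, |s|)⁻¹ (v(s+e_i) - v(s))`. -/
noncomputable def shapleyValue (d : ℕ) (v : Finset (Fin d) → ℝ) :
    EuclideanSpace ℝ (Fin d) :=
  WithLp.toLp 2 (fun i => (1 / (d : ℝ)) *
    ∑ s ∈ Finset.univ.filter (fun s : Finset (Fin d) => i ∉ s),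
      ((Nat.choose (d - 1) s.card : ℝ))⁻¹ * (v (insert i s) - v s))

/-!
`h_v` is a quadratic in `φ` with gradient `-2 g` where `g_i = ∑_{s ∋ i} p_Sh(s) (v(s) - v(0) - sᵀφ)`,
and its quadratic part `∑_s p_Sh(s) (sᵀu)²` is positive definite because singletons have positive
weight. Hence a point of the hyperplane `1ᵀφ = v(1) - v(0)` at which all `g_i` coincide is the
unique minimiser there.

For `φ = φ(v)` and `i ≠ j`, grouping coalitions by `t = s \ {i, j}` gives
`g_i - g_j = ∑_t p_Sh(t ∪ {i}) (v(t ∪ {i}) - v(t ∪ {j}) - (φ_i - φ_j))`. Now `p_Sh(t ∪ {i})` is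
proportional to the weight `r_t = q_{|t|} + q_{|t|+1}` of `t` in
`φ_i - φ_j = ∑_t r_t (v(t ∪ {i}) - v(t ∪ {j}))`, where `q_k = 1 / (d C(d-1, k))`, and `∑_t r_t = 1`,
so `g_i = g_j`. Efficiency `1ᵀφ(v) = v(1) - v(0)` is the telescoping `k q_{k-1} = (d - k) q_k`.
-/

open Finset

section SubsetSums

variable {ι M : Type*} [Fintype ι] [DecidableEq ι] [AddCommMonoid M]

lemma sum_sum_mem_comm (F : Finset ι → ι → M) :
    ∑ s, ∑ i ∈ s, F s i = ∑ i, ∑ s with i ∈ s, F s i :=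
  sum_comm' fun s i => by simp

lemma sum_filter_mem_eq_sum_filter_notMem_insert (i : ι) (f : Finset ι → M) :
    ∑ s with i ∈ s, f s = ∑ s with i ∉ s, f (insert i s) := by
  refine sum_nbij' (fun s => s.erase i) (insert i) ?_ ?_ ?_ ?_ ?_ <;>
    intro s hs <;> simp only [mem_filter, mem_univ, true_and] at hs ⊢
  · exact notMem_erase i s
  · exact mem_insert_self i s
  · exact insert_erase hs
  · exact erase_insert hs
  · rw [insert_erase hs]

lemma filter_notMem_eq_powerset_erase (i : ι) :
    ({s | i ∉ s} : Finset (Finset ι)) = (univ.erase i).powerset := by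
  ext s
  simp [subset_iff]

lemma sum_filter_notMem_eq_sum_add_insert {i j : ι} (hij : i ≠ j) (G : Finset ι → M) :
    ∑ s with i ∉ s, G s = ∑ t ∈ ((univ.erase i).erase j).powerset, (G t + G (insert j t)) := by
  have hj : univ.erase i = insert j ((univ.erase i).erase j) :=
    (insert_erase (mem_erase.2 ⟨hij.symm, mem_univ j⟩)).symm
  rw [filter_notMem_eq_powerset_erase, hj, sum_powerset_insert (notMem_erase j _),
    ← sum_add_distrib, ← hj]

lemma sum_sum_filter_mem (F : Finset ι → ℝ) : ∑ i, ∑ s with i ∈ s, F s = ∑ s, #s * F s := by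
  simp [← sum_sum_mem_comm]

lemma sum_sum_filter_notMem (F : Finset ι → ℝ) :
    ∑ i, ∑ s with i ∉ s, F s = ∑ s, (Fintype.card ι - #s) * F s := by
  have hcompl : ∀ i : ι, ∑ s with i ∉ s, F s = ∑ s, F s - ∑ s with i ∈ s, F s := fun i =>
    eq_sub_of_add_eq' (sum_filter_add_sum_filter_not _ _ _)
  simp only [hcompl, sum_sub_distrib, sum_sum_filter_mem, sub_mul, sum_const, card_univ,
    nsmul_eq_mul, mul_sum]

lemma sum_filter_mem_sub_sum_filter_mem {i j : ι} (hij : i ≠ j) (f : Finset ι → ℝ) :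
    ∑ s with i ∈ s, f s - ∑ s with j ∈ s, f s
      = ∑ t ∈ ((univ.erase i).erase j).powerset, (f (insert i t) - f (insert j t)) := by
  rw [sum_filter_mem_eq_sum_filter_notMem_insert i, sum_filter_mem_eq_sum_filter_notMem_insert j,
    sum_filter_notMem_eq_sum_add_insert hij, sum_filter_notMem_eq_sum_add_insert hij.symm,
    erase_right_comm, ← sum_sub_distrib]
  refine sum_congr rfl fun t _ => ?_
  rw [insert_comm j i]
  ring

end SubsetSums

section SubsetRegression

variable {ι : Type*} [Fintype ι] [DecidableEq ι]

def subsetLoss (w y : Finset ι → ℝ) (φ : ι → ℝ) : ℝ :=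
  ∑ s, w s * (y s - ∑ i ∈ s, φ i) ^ 2

/-- `-½ ∂(subsetLoss w y)/∂φᵢ`. -/
def residualCorr (w y : Finset ι → ℝ) (φ : ι → ℝ) (i : ι) : ℝ :=
  ∑ s with i ∈ s, w s * (y s - ∑ l ∈ s, φ l)

theorem subsetLoss_lt_of_residualCorr_eq {w : Finset ι → ℝ} (hw : ∀ s, 0 ≤ w s)
    (hw₁ : ∀ i, 0 < w {i}) (y : Finset ι → ℝ) {ψ φ : ι → ℝ}
    (hψ : ∀ i j, residualCorr w y ψ i = residualCorr w y ψ j)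
    (hsum : ∑ i, φ i = ∑ i, ψ i) (hne : φ ≠ ψ) :
    subsetLoss w y ψ < subsetLoss w y φ := by
  set u := φ - ψ
  obtain ⟨i₀, hi₀⟩ : ∃ i, u i ≠ 0 := by
    by_contra! h
    exact hne (funext fun i => sub_eq_zero.1 (h i))
  have hexpand : subsetLoss w y φ = subsetLoss w y ψ
      - 2 * ∑ s, w s * (y s - ∑ l ∈ s, ψ l) * ∑ l ∈ s, u l
      + ∑ s, w s * (∑ l ∈ s, u l) ^ 2 := by
    have hφ : ∀ s : Finset ι, ∑ l ∈ s, φ l = ∑ l ∈ s, ψ l + ∑ l ∈ s, u l := fun s => by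
      simp [u, sum_sub_distrib]
    rw [subsetLoss, subsetLoss, mul_sum, ← sum_sub_distrib, ← sum_add_distrib]
    exact sum_congr rfl fun s _ => by rw [hφ]; ring
  have hcross : ∑ s, w s * (y s - ∑ l ∈ s, ψ l) * ∑ l ∈ s, u l = 0 := by
    simp only [mul_sum, sum_sum_mem_comm]
    calc ∑ i, ∑ s with i ∈ s, w s * (y s - ∑ l ∈ s, ψ l) * u i
        = ∑ i, residualCorr w y ψ i * u i := by simp only [residualCorr, sum_mul]
      _ = residualCorr w y ψ i₀ * ∑ i, u i := by simp only [hψ _ i₀, mul_sum]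
      _ = 0 := by simp [u, sum_sub_distrib, hsum]
  have hquad : 0 < ∑ s, w s * (∑ l ∈ s, u l) ^ 2 :=
    sum_pos' (fun s _ => mul_nonneg (hw s) (sq_nonneg _))
      ⟨{i₀}, mem_univ _, by rw [sum_singleton]; have := hw₁ i₀; positivity⟩
  linarith

end SubsetRegression

noncomputable def shapleyCoeff (d k : ℕ) : ℝ := ((d : ℝ) * (d - 1).choose k)⁻¹

lemma shapleyValue_apply (d : ℕ) (v : Finset (Fin d) → ℝ) (i : Fin d) :
    shapleyValue d v i = ∑ s with i ∉ s, shapleyCoeff d #s * (v (insert i s) - v s) := by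
  rw [shapleyValue, WithLp.ofLp_toLp, mul_sum]
  exact sum_congr rfl fun s _ => by rw [shapleyCoeff, mul_inv, one_div, mul_assoc]

lemma card_mul_shapleyCoeff_pred_sub {d k : ℕ} (hk : k ≤ d) :
    k * shapleyCoeff d (k - 1) - (d - k) * shapleyCoeff d k
      = (if k = d then 1 else 0) - (if k = 0 then 1 else 0) := by
  rcases Nat.eq_zero_or_pos k with rfl | hk0
  · rcases eq_or_ne d 0 with rfl | hd
    · simp
    · simp [shapleyCoeff, hd, Ne.symm hd]
  obtain ⟨m, rfl⟩ := Nat.exists_eq_add_one_of_ne_zero hk0.ne'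
  rcases hk.eq_or_lt with rfl | hlt
  · simp [shapleyCoeff, Nat.cast_add_one_ne_zero]
  obtain ⟨e, rfl⟩ := Nat.exists_eq_add_of_lt hlt
  have hrec := Nat.choose_succ_right_eq (m + 1 + e) m
  rw [show m + 1 + e - m = e + 1 by omega] at hrec
  have hpos : 0 < (m + 1 + e).choose m := Nat.choose_pos (by omega)
  have hpos' : 0 < (m + 1 + e).choose (m + 1) := Nat.choose_pos (by omega)
  rw [if_neg (by omega), if_neg (by omega), shapleyCoeff, shapleyCoeff,
    show m + 1 + e + 1 - 1 = m + 1 + e by omega, Nat.add_sub_cancel]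
  field_simp
  push_cast
  have hrec' : ((m + 1 + e).choose (m + 1) : ℝ) * (m + 1) = (m + 1 + e).choose m * (e + 1) := by
    exact_mod_cast hrec
  linear_combination hrec'

theorem sum_shapleyValue (d : ℕ) (v : Finset (Fin d) → ℝ) :
    ∑ i, shapleyValue d v i = v univ - v ∅ := by
  have hsplit : ∀ i, shapleyValue d v i
      = ∑ s with i ∈ s, shapleyCoeff d (#s - 1) * v s
        - ∑ s with i ∉ s, shapleyCoeff d #s * v s := by
    intro i
    rw [shapleyValue_apply, sum_filter_mem_eq_sum_filter_notMem_insert i, ← sum_sub_distrib]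
    refine sum_congr rfl fun s hs => ?_
    rw [card_insert_of_notMem (mem_filter.1 hs).2, Nat.add_sub_cancel, mul_sub]
  rw [sum_congr rfl fun i _ => hsplit i, sum_sub_distrib, sum_sum_filter_mem,
    sum_sum_filter_notMem, Fintype.card_fin, ← sum_sub_distrib]
  calc ∑ s : Finset (Fin d),
        (#s * (shapleyCoeff d (#s - 1) * v s) - (d - #s) * (shapleyCoeff d #s * v s))
      = ∑ s : Finset (Fin d), ((if #s = d then 1 else 0) - (if #s = 0 then 1 else 0)) * v s := by
        refine sum_congr rfl fun s _ => ?_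
        rw [← card_mul_shapleyCoeff_pred_sub (card_le_univ s |>.trans_eq (Fintype.card_fin d))]
        ring
    _ = v univ - v ∅ := by
        have hcard : ∀ s : Finset (Fin d), #s = d ↔ s = univ := fun s => by
          rw [← card_eq_iff_eq_univ, Fintype.card_fin]
        simp only [hcard, card_eq_zero, sub_mul, ite_mul, one_mul, zero_mul, sum_sub_distrib,
          sum_ite_eq', mem_univ, if_true]

lemma shapleyValue_sub {d : ℕ} (v : Finset (Fin d) → ℝ) {i j : Fin d} (hij : i ≠ j) :
    shapleyValue d v i - shapleyValue d v j
      = ∑ t ∈ ((univ.erase i).erase j).powerset,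
          (shapleyCoeff d #t + shapleyCoeff d (#t + 1)) * (v (insert i t) - v (insert j t)) := by
  rw [shapleyValue_apply, shapleyValue_apply, sum_filter_notMem_eq_sum_add_insert hij,
    sum_filter_notMem_eq_sum_add_insert hij.symm, erase_right_comm, ← sum_sub_distrib]
  refine sum_congr rfl fun t ht => ?_
  have hit : i ∉ t := fun h => by simpa using mem_powerset.1 ht h
  have hjt : j ∉ t := fun h => by simpa using mem_powerset.1 ht h
  rw [card_insert_of_notMem hit, card_insert_of_notMem hjt, insert_comm j i]
  ring

lemma shapleyCoeff_add_succ {n k : ℕ} (hk : k ≤ n) :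
    shapleyCoeff (n + 2) k + shapleyCoeff (n + 2) (k + 1) = (((n : ℝ) + 1) * n.choose k)⁻¹ := by
  have h₁ : (n.choose k : ℝ) * (n + 1) = (n + 1).choose k * (n - k + 1) := by
    rw [← Nat.cast_sub hk]; exact_mod_cast (Nat.sub_add_comm hk ▸ Nat.choose_mul_succ_eq n k)
  have h₂ : ((n : ℝ) + 1) * n.choose k = (n + 1).choose (k + 1) * (k + 1) := by
    exact_mod_cast Nat.add_one_mul_choose_eq n k
  have ha : (0 : ℝ) < (n + 1).choose k := by exact_mod_cast Nat.choose_pos (by omega)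
  have hb : (0 : ℝ) < (n + 1).choose (k + 1) := by exact_mod_cast Nat.choose_pos (by omega)
  have hc : (0 : ℝ) < n.choose k := by exact_mod_cast Nat.choose_pos hk
  rw [shapleyCoeff, shapleyCoeff, show n + 2 - 1 = n + 1 from rfl]
  field_simp
  push_cast
  linear_combination ((n + 1).choose (k + 1) : ℝ) * h₁ + ((n + 1).choose k : ℝ) * h₂

lemma sum_powerset_shapleyCoeff_add_succ {α : Type*} {n : ℕ} {A : Finset α} (hA : #A = n) :
    ∑ t ∈ A.powerset, (shapleyCoeff (n + 2) #t + shapleyCoeff (n + 2) (#t + 1)) = 1 := by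
  rw [sum_powerset_apply_card (fun k => shapleyCoeff (n + 2) k + shapleyCoeff (n + 2) (k + 1)), hA]
  have hterm : ∀ k ∈ range (n + 1),
      n.choose k • (shapleyCoeff (n + 2) k + shapleyCoeff (n + 2) (k + 1)) = ((n : ℝ) + 1)⁻¹ := by
    intro k hk
    have hkn : k ≤ n := Nat.lt_succ_iff.1 (mem_range.1 hk)
    have hc : (0 : ℝ) < n.choose k := by exact_mod_cast Nat.choose_pos hkn
    rw [nsmul_eq_mul, shapleyCoeff_add_succ hkn]
    field_simp
  rw [sum_congr rfl hterm, sum_const, card_range, nsmul_eq_mul]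
  push_cast
  field_simp

lemma shapQ_pos (n : ℕ) : 0 < shapQ (n + 2) := by
  refine sum_pos (fun k hk => ?_) ⟨1, by simp⟩
  have hk' : 1 ≤ k ∧ k ≤ n + 1 := by simpa using hk
  have h₁ : (1 : ℝ) ≤ k := by exact_mod_cast hk'.1
  have h₂ : (k : ℝ) ≤ n + 1 := by exact_mod_cast hk'.2
  push_cast
  exact div_pos (by linarith) (mul_pos (by linarith) (by linarith))

lemma shapQ_nonneg (d : ℕ) : 0 ≤ shapQ d := by
  refine sum_nonneg fun k hk => ?_
  have hk' : 1 ≤ k ∧ k ≤ d - 1 := by simpa using hk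
  have h₁ : (1 : ℝ) ≤ k := by exact_mod_cast hk'.1
  have h₂ : (k : ℝ) + 1 ≤ d := by exact_mod_cast (by omega : k + 1 ≤ d)
  exact div_nonneg (by linarith) (mul_nonneg (by linarith) (by linarith))

lemma pSh_nonneg (d : ℕ) (s : Finset (Fin d)) : 0 ≤ pSh d s := by
  unfold pSh
  split_ifs with hs
  · have h₁ : (1 : ℝ) ≤ #s := by exact_mod_cast hs.1
    have h₂ : (#s : ℝ) + 1 ≤ d := by exact_mod_cast hs.2
    have hc : (0 : ℝ) < d.choose #s := by exact_mod_cast Nat.choose_pos hs.2.le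
    refine div_nonneg (div_nonneg (by linarith) ?_) (shapQ_nonneg d)
    exact mul_nonneg (mul_nonneg hc.le (by linarith)) (by linarith)
  · exact le_rfl

lemma pSh_singleton_pos (n : ℕ) (i : Fin (n + 2)) : 0 < pSh (n + 2) {i} := by
  rw [pSh, if_pos (by simp), card_singleton]
  have := shapQ_pos n
  norm_num
  rw [show (n : ℝ) + 2 - 1 = n + 1 by ring]
  positivity

lemma pSh_eq_of_card_eq_succ {n k : ℕ} (hk : k ≤ n) {s : Finset (Fin (n + 2))} (hs : #s = k + 1) :
    pSh (n + 2) s = (n + 1) / ((n + 2) * shapQ (n + 2))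
      * (shapleyCoeff (n + 2) k + shapleyCoeff (n + 2) (k + 1)) := by
  have h₁ : ((n : ℝ) + 2) * (n + 1).choose k = (n + 2).choose (k + 1) * (k + 1) := by
    exact_mod_cast Nat.add_one_mul_choose_eq (n + 1) k
  have h₂ : (n.choose k : ℝ) * (n + 1) = (n + 1).choose k * (n - k + 1) := by
    rw [← Nat.cast_sub hk]; exact_mod_cast (Nat.sub_add_comm hk ▸ Nat.choose_mul_succ_eq n k)
  have ha : (0 : ℝ) < (n + 1).choose k := by exact_mod_cast Nat.choose_pos (by omega)
  have hb : (0 : ℝ) < (n + 2).choose (k + 1) := by exact_mod_cast Nat.choose_pos (by omega)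
  have hc : (0 : ℝ) < n.choose k := by exact_mod_cast Nat.choose_pos hk
  have hnk : (n : ℝ) + 2 - (k + 1) = n - k + 1 := by ring
  have hnk' : (0 : ℝ) < n - k + 1 := by
    have : (k : ℝ) ≤ n := by exact_mod_cast hk
    linarith
  have hQ := shapQ_pos n
  rw [pSh, if_pos (by omega), hs, shapleyCoeff_add_succ hk]
  push_cast
  rw [hnk]
  field_simp
  linear_combination ((n : ℝ) + 2) * h₂ + ((n : ℝ) - k + 1) * h₁

lemma residualCorr_shapleyValue_eq (n : ℕ) (v : Finset (Fin (n + 2)) → ℝ) (i j : Fin (n + 2)) :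
    residualCorr (pSh (n + 2)) (fun s => v s - v ∅) (shapleyValue (n + 2) v) i
      = residualCorr (pSh (n + 2)) (fun s => v s - v ∅) (shapleyValue (n + 2) v) j := by
  rcases eq_or_ne i j with rfl | hij
  · rfl
  set φ := shapleyValue (n + 2) v
  set r : Finset (Fin (n + 2)) → ℝ :=
    fun t => shapleyCoeff (n + 2) #t + shapleyCoeff (n + 2) (#t + 1)
  set c : ℝ := (n + 1) / ((n + 2) * shapQ (n + 2))
  have hcard : #((univ.erase i).erase j) = n := by
    rw [card_erase_of_mem (mem_erase.2 ⟨hij.symm, mem_univ j⟩), card_erase_of_mem (mem_univ i),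
      card_univ, Fintype.card_fin]
    rfl
  have hterm : ∀ t ∈ ((univ.erase i).erase j).powerset,
      pSh (n + 2) (insert i t) * (v (insert i t) - v ∅ - ∑ l ∈ insert i t, φ l)
        - pSh (n + 2) (insert j t) * (v (insert j t) - v ∅ - ∑ l ∈ insert j t, φ l)
      = c * (r t * (v (insert i t) - v (insert j t)) - r t * (φ i - φ j)) := by
    intro t ht
    have hsub := mem_powerset.1 ht
    have hit : i ∉ t := fun h => by simpa using hsub h
    have hjt : j ∉ t := fun h => by simpa using hsub h
    have ht : #t ≤ n := (card_le_card hsub).trans_eq hcard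
    rw [pSh_eq_of_card_eq_succ ht (card_insert_of_notMem hit),
      pSh_eq_of_card_eq_succ ht (card_insert_of_notMem hjt), sum_insert hit, sum_insert hjt]
    ring
  rw [← sub_eq_zero, residualCorr, residualCorr, sum_filter_mem_sub_sum_filter_mem hij,
    sum_congr rfl hterm, ← mul_sum, sum_sub_distrib, ← sum_mul, ← shapleyValue_sub v hij,
    sum_powerset_shapleyCoeff_add_succ hcard, one_mul, sub_self, mul_zero]

/-- The Shapley values are the unique minimizer of the Shapley regression loss over the
affine constraint set `{φ : 1ᵀφ = v(1) - v(0)}`. -/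
theorem shapley_unique_constrained_minimizer (d : ℕ) (hd : 2 ≤ d)
    (v : Finset (Fin d) → ℝ) :
    (∑ i, shapleyValue d v i = v Finset.univ - v ∅) ∧
    ∀ φ : EuclideanSpace ℝ (Fin d),
      ∑ i, φ i = v Finset.univ - v ∅ → φ ≠ shapleyValue d v →
        hLoss d v (shapleyValue d v) < hLoss d v φ := by
  refine ⟨sum_shapleyValue d v, fun φ hφ hne => ?_⟩
  obtain ⟨n, rfl⟩ := Nat.exists_eq_add_of_le' hd
  exact subsetLoss_lt_of_residualCorr_eq (pSh_nonneg _) (pSh_singleton_pos n) (fun s => v s - v ∅)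
    (residualCorr_shapleyValue_eq n v) (by rw [hφ, sum_shapleyValue])
    (fun h => hne (WithLp.ofLp_injective 2 h))
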